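/- arXiv:1701.04550 — 4 statements merged into one kernel-verified Lean document; each statement's English description precedes it below -/
import Mathlib

section
/- If G is a graph satisfying the Erdős–Faber–Lovász hypothesis (G is the union of n complete graphs A_1, …, A_n, each on exactly n vertices, with every pair of the complete graphs sharing at most one common vertex), and for every i (1 ≤ i ≤ n) the complete graph A_i contains at most √n vertices of clique degree greater than 1, then G has a proper vertex coloring with n colors (the chromatic number of G is at most n). -/
/-!
Colour greedily along decreasing clique degree. Equivalently: in every finite vertex set, a
vertex `v` of minimum clique degree `d` has fewer than `n` neighbours there, since all of them
have clique degree at least `d`.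
If `d (d - 1) ≥ n` there are fewer than `n` vertices of clique degree `≥ d` at all: distinct
such vertices occupy disjoint sets of ordered pairs of cliques, because two cliques share at
most one vertex. If `d (d - 1) < n`, each of the `d` cliques through `v` contributes at most
`√n - 1` such neighbours when `d ≥ 2` (they all have clique degree `> 1`), and at most `n - 1`
when `d ≤ 1`.
-/

open Finset

theorem SimpleGraph.exists_coloring_on_of_degenerate {V : Type*} [DecidableEq V]
    (G : SimpleGraph V) [DecidableRel G.Adj] {n : ℕ} [NeZero n] (s : Finset V)
    (h : ∀ t ⊆ s, t.Nonempty → ∃ v ∈ t, #{u ∈ t | G.Adj v u} < n) :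
    ∃ c : V → Fin n, ∀ u ∈ s, ∀ v ∈ s, G.Adj u v → c u ≠ c v := by
  induction s using Finset.strongInduction with
  | H s ih =>
  rcases s.eq_empty_or_nonempty with rfl | hs
  · exact ⟨0, by simp⟩
  obtain ⟨v, hv, hdeg⟩ := h s subset_rfl hs
  obtain ⟨c, hc⟩ := ih (s.erase v) (erase_ssubset hv) fun t ht =>
    h t (ht.trans (erase_subset _ _))
  obtain ⟨k, -, hk⟩ : ∃ k ∈ (univ : Finset (Fin n)), k ∉ {u ∈ s | G.Adj v u}.image c :=
    exists_mem_notMem_of_card_lt_card <| by simpa using card_image_le.trans_lt hdeg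
  have hfresh : ∀ u ∈ s, G.Adj v u → c u ≠ k := fun u hu hvu hck =>
    hk (mem_image.2 ⟨u, mem_filter.2 ⟨hu, hvu⟩, hck⟩)
  refine ⟨Function.update c v k, fun a ha b hb hab => ?_⟩
  have hne := G.ne_of_adj hab
  rcases eq_or_ne a v with rfl | hav
  · simpa [hne.symm] using (hfresh b hb hab).symm
  rcases eq_or_ne b v with rfl | hbv
  · simpa [hav] using hfresh a ha hab.symm
  · simpa [hav, hbv] using hc a (mem_erase.2 ⟨hav, ha⟩) b (mem_erase.2 ⟨hbv, hb⟩) hab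

theorem Nat.succ_mul_lt_of_sq_lt {a b n : ℕ} (ha : a ^ 2 < n) (hb : (b + 1) ^ 2 ≤ n) :
    (a + 1) * b < n := by
  rcases le_or_gt a b with hab | hab <;> nlinarith

section CliqueDegree

variable {ι V : Type*} [Fintype ι] [DecidableEq V]

def cliqueDegree (A : ι → Finset V) (v : V) : ℕ := #{i | v ∈ A i}

theorem card_mul_le_of_le_cliqueDegree [DecidableEq ι] {A : ι → Finset V}
    (hA : ∀ i j, i ≠ j → #(A i ∩ A j) ≤ 1) {S : Finset V} {d : ℕ}
    (hS : ∀ u ∈ S, d ≤ cliqueDegree A u) :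
    #S * (d * (d - 1)) ≤ Fintype.card ι * (Fintype.card ι - 1) := by
  have hdisj : (S : Set V).PairwiseDisjoint fun u => ({i | u ∈ A i} : Finset ι).offDiag := by
    intro u _ w _ huw
    refine disjoint_left.2 fun p hu hw => huw ?_
    simp only [mem_offDiag, mem_filter, mem_univ, true_and] at hu hw
    exact card_le_one.1 (hA _ _ hu.2.2) u (mem_inter.2 ⟨hu.1, hu.2.1⟩) w
      (mem_inter.2 ⟨hw.1, hw.2.1⟩)
  calc #S * (d * (d - 1))
      ≤ ∑ u ∈ S, #({i | u ∈ A i} : Finset ι).offDiag := by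
        refine card_nsmul_le_sum _ _ _ fun u hu => ?_
        rw [offDiag_card, ← Nat.mul_sub_one]
        exact Nat.mul_le_mul (hS u hu) (Nat.sub_le_sub_right (hS u hu) 1)
    _ = #(S.biUnion fun u => ({i | u ∈ A i} : Finset ι).offDiag) := (card_biUnion hdisj).symm
    _ ≤ #(univ : Finset ι).offDiag :=
        card_le_card (biUnion_subset.2 fun _ _ => offDiag_mono (subset_univ _))
    _ = Fintype.card ι * (Fintype.card ι - 1) := by rw [offDiag_card, Nat.mul_sub_one, card_univ]

variable {n : ℕ} {A : Fin n → Finset V} {v : V} {t : Finset V}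

theorem card_lt_of_le_cliqueDegree_of_le_mul (hn : 0 < n)
    (hA : ∀ i j, i ≠ j → #(A i ∩ A j) ≤ 1) (hvt : v ∉ t)
    (ht : ∀ u ∈ t, cliqueDegree A v ≤ cliqueDegree A u)
    (hlarge : n ≤ cliqueDegree A v * (cliqueDegree A v - 1)) : #t < n := by
  have hcount := card_mul_le_of_le_cliqueDegree hA (S := insert v t) (d := cliqueDegree A v)
    (forall_mem_insert _ _ _ |>.2 ⟨le_rfl, ht⟩)
  rw [card_insert_of_notMem hvt, Fintype.card_fin] at hcount
  have hmul : (#t + 1) * n ≤ n * (n - 1) := (Nat.mul_le_mul_left _ hlarge).trans hcount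
  have hle : #t + 1 ≤ n - 1 := Nat.le_of_mul_le_mul_right (by rwa [mul_comm (n - 1)]) hn
  omega

theorem card_lt_of_le_cliqueDegree_of_mul_lt (hn : 0 < n) (hcard : ∀ i, #(A i) = n)
    (hsqrt : ∀ i, #{u ∈ A i | 1 < cliqueDegree A u} ^ 2 ≤ n) (hvt : v ∉ t)
    (ht : ∀ u ∈ t, (∃ i, v ∈ A i ∧ u ∈ A i) ∧ cliqueDegree A v ≤ cliqueDegree A u)
    (hsmall : cliqueDegree A v * (cliqueDegree A v - 1) < n) : #t < n := by
  set d := cliqueDegree A v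
  have hunion : #t ≤ ∑ i with v ∈ A i, #(A i ∩ t) := by
    refine (card_le_card fun u hu => ?_).trans card_biUnion_le
    obtain ⟨⟨i, hvi, hui⟩, -⟩ := ht u hu
    exact mem_biUnion.2 ⟨i, by simpa using hvi, mem_inter.2 ⟨hui, hu⟩⟩
  have hinsert : ∀ i, v ∈ A i → #(A i ∩ t) + 1 = #(A i ∩ insert v t) := fun i hvi => by
    rw [inter_insert_of_mem hvi, card_insert_of_notMem fun h => hvt (mem_inter.1 h).2]
  have hsum : ∀ b, (∀ i, v ∈ A i → #(A i ∩ t) ≤ b) → #t ≤ d * b := fun b hb =>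
    hunion.trans <| (sum_le_card_nsmul _ _ _ fun i hi => hb i (mem_filter.1 hi).2).trans_eq
      (smul_eq_mul _ _)
  rcases le_or_gt d 1 with hd | hd
  · have hle := hsum (n - 1) fun i hvi => by
      have := card_le_card (inter_subset_left (s₁ := A i) (s₂ := insert v t))
      rw [← hinsert i hvi, hcard] at this
      omega
    have hd' : d * (n - 1) ≤ 1 * (n - 1) := Nat.mul_le_mul_right _ hd
    omega
  · have hhigh : ∀ i, v ∈ A i → #(A i ∩ t) ≤ Nat.sqrt n - 1 := fun i hvi => by
      have hsub : A i ∩ insert v t ⊆ {u ∈ A i | 1 < cliqueDegree A u} := fun u hu => by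
        obtain ⟨hui, hu⟩ := mem_inter.1 hu
        rcases mem_insert.1 hu with rfl | hut
        · exact mem_filter.2 ⟨hui, hd⟩
        · exact mem_filter.2 ⟨hui, hd.trans_le (ht u hut).2⟩
      have := (card_le_card hsub).trans (Nat.le_sqrt'.2 (hsqrt i))
      rw [← hinsert i hvi] at this
      omega
    have hs : 0 < Nat.sqrt n := Nat.sqrt_pos.2 hn
    have := Nat.succ_mul_lt_of_sq_lt (a := d - 1) (b := Nat.sqrt n - 1) (n := n)
      (by nlinarith [Nat.sub_add_cancel hd.le])
      (by rw [Nat.sub_add_cancel hs]; exact Nat.sqrt_le' n)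
    rw [Nat.sub_add_cancel (by omega)] at this
    exact (hsum _ hhigh).trans_lt this

theorem card_lt_of_le_cliqueDegree (hn : 0 < n) (hA : ∀ i j, i ≠ j → #(A i ∩ A j) ≤ 1)
    (hcard : ∀ i, #(A i) = n) (hsqrt : ∀ i, #{u ∈ A i | 1 < cliqueDegree A u} ^ 2 ≤ n)
    (hvt : v ∉ t)
    (ht : ∀ u ∈ t, (∃ i, v ∈ A i ∧ u ∈ A i) ∧ cliqueDegree A v ≤ cliqueDegree A u) :
    #t < n := by
  rcases le_or_gt n (cliqueDegree A v * (cliqueDegree A v - 1)) with hlarge | hsmall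
  · exact card_lt_of_le_cliqueDegree_of_le_mul hn hA hvt (fun u hu => (ht u hu).2) hlarge
  · exact card_lt_of_le_cliqueDegree_of_mul_lt hn hcard hsqrt hvt ht hsmall

end CliqueDegree

/-- **EFL for graphs, √n bound (Hegde–Dara, Theorem 1).**
If `G` is the union of `n` complete graphs `A 0, …, A (n-1)`, each on exactly `n`
vertices, any two sharing at most one vertex, and every `A i` has at most `√n`
vertices of clique degree greater than `1`, then `G` is `n`-colorable. -/
theorem efl_sqrt_bound {V : Type*} [DecidableEq V] (n : ℕ) (hn : 1 ≤ n)
    (A : Fin n → Finset V)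
    (hcard : ∀ i, (A i).card = n)
    (hint : ∀ i j, i ≠ j → (A i ∩ A j).card ≤ 1)
    (G : SimpleGraph V)
    (hG : ∀ u v, G.Adj u v ↔ u ≠ v ∧ ∃ i, u ∈ A i ∧ v ∈ A i)
    (hsqrt : ∀ i, (((A i).filter (fun v =>
        1 < (Finset.univ.filter (fun j => v ∈ A j)).card)).card : ℝ) ≤ Real.sqrt n) :
    G.Colorable n := by
  classical
  have : NeZero n := ⟨by omega⟩
  have hsqrt' (i) : #{u ∈ A i | 1 < cliqueDegree A u} ^ 2 ≤ n := by
    exact_mod_cast (Real.le_sqrt (Nat.cast_nonneg _) (Nat.cast_nonneg _)).1 (hsqrt i)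
  obtain ⟨c, hc⟩ := G.exists_coloring_on_of_degenerate (univ.biUnion A) fun t _ ht => by
    obtain ⟨v, hv, hmin⟩ := t.exists_min_image (cliqueDegree A) ht
    refine ⟨v, hv, card_lt_of_le_cliqueDegree (v := v) (t := {u ∈ t | G.Adj v u}) hn hint hcard
      hsqrt' (by simp) fun u hu => ?_⟩
    obtain ⟨hu, hvu⟩ := mem_filter.1 hu
    exact ⟨((hG v u).1 hvu).2, hmin u hu⟩
  have hmem (u v) (huv : G.Adj u v) : u ∈ univ.biUnion A := by
    obtain ⟨-, i, hui, -⟩ := (hG u v).1 huv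
    exact mem_biUnion.2 ⟨i, mem_univ _, hui⟩
  exact ⟨.mk c fun huv => hc _ (hmem _ _ huv) _ (hmem _ _ huv.symm) huv⟩
end

section
/- Let G be a graph satisfying the Erdős–Faber–Lovász hypothesis (G is the union of n complete graphs A_1, …, A_n, each on exactly n vertices, with every pair of the complete graphs sharing at most one common vertex). Then for every m ≥ 2, the number of vertices of G of clique degree exactly m is at most C(n,2)/C(m,2) = (n(n-1))/(m(m-1)). -/
/-- **Hegde–Dara, Corollary 1.**
If `A 0, …, A (n-1)` are `n` sets of size `n`, any two sharing at most one vertex,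
then for every `m ≥ 2` the number of vertices of clique degree exactly `m`
is at most `C(n,2) / C(m,2)`. -/
theorem efl_count_eq_deg_le {V : Type*} [DecidableEq V] (n : ℕ) (hn : 1 ≤ n)
    (A : Fin n → Finset V)
    (hcard : ∀ i, (A i).card = n)
    (hint : ∀ i j, i ≠ j → (A i ∩ A j).card ≤ 1)
    (m : ℕ) (hm : 2 ≤ m) :
    (((Finset.univ.biUnion A).filter
        (fun v => (Finset.univ.filter (fun j => v ∈ A j)).card = m)).card : ℚ)
      ≤ (n.choose 2 : ℚ) / (m.choose 2 : ℚ) := by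
  classical
  set S := ((Finset.univ.biUnion A).filter
      (fun v => (Finset.univ.filter (fun j => v ∈ A j)).card = m)) with hS
  set P : V → Finset (Fin n × Fin n) :=
    fun v => (Finset.univ.filter (fun j => v ∈ A j)).offDiag with hP
  have hPcard : ∀ v ∈ S, (P v).card = m * m - m := by
    intro v hv
    rw [hS, Finset.mem_filter] at hv
    simp only [hP, Finset.offDiag_card, hv.2]
  have hmemP : ∀ v p, p ∈ P v ↔ v ∈ A p.1 ∧ v ∈ A p.2 ∧ p.1 ≠ p.2 := by
    intro v p
    simp [hP, Finset.mem_offDiag]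
  have hdisj : ∀ v ∈ S, ∀ w ∈ S, v ≠ w → Disjoint (P v) (P w) := by
    intro v _ w _ hvw
    rw [Finset.disjoint_left]
    intro p hp hq
    rw [hmemP] at hp hq
    have h2 : 2 ≤ (A p.1 ∩ A p.2).card := by
      apply Finset.one_lt_card.mpr
      exact ⟨v, Finset.mem_inter.mpr ⟨hp.1, hp.2.1⟩,
             w, Finset.mem_inter.mpr ⟨hq.1, hq.2.1⟩, hvw⟩
    have := hint p.1 p.2 hp.2.2
    omega
  have key : S.card * (m * m - m) ≤ n * n - n := by
    calc S.card * (m * m - m) = ∑ v ∈ S, (P v).card := by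
          rw [Finset.sum_congr rfl hPcard, Finset.sum_const, smul_eq_mul]
      _ = (S.biUnion P).card := (Finset.card_biUnion hdisj).symm
      _ ≤ ((Finset.univ : Finset (Fin n)).offDiag).card := by
          apply Finset.card_le_card
          intro p hp
          rw [Finset.mem_biUnion] at hp
          obtain ⟨v, _, hpv⟩ := hp
          rw [hmemP] at hpv
          simp [Finset.mem_offDiag, hpv.2.2]
      _ = n * n - n := by
          rw [Finset.offDiag_card, Finset.card_univ, Fintype.card_fin]
  have haux : ∀ k : ℕ, 2 * k.choose 2 = k * k - k := by
    intro k
    rw [Nat.choose_two_right]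
    have h1 : k * (k - 1) = k * k - k := by
      rw [Nat.mul_sub, mul_one]
    have := Nat.div_mul_cancel (Nat.even_mul_pred_self k).two_dvd
    omega
  have h2m := haux m
  have h2n := haux n
  have hkey2 : S.card * m.choose 2 ≤ n.choose 2 := by
    have h : 2 * (S.card * m.choose 2) ≤ 2 * n.choose 2 := by
      calc 2 * (S.card * m.choose 2) = S.card * (2 * m.choose 2) := by ring
        _ = S.card * (m * m - m) := by rw [h2m]
        _ ≤ n * n - n := key
        _ = 2 * n.choose 2 := h2n.symm
    omega
  have hmpos : (0 : ℚ) < (m.choose 2 : ℚ) := by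
    have : 0 < m.choose 2 := Nat.choose_pos hm
    exact_mod_cast this
  rw [le_div_iff₀ hmpos]
  exact_mod_cast hkey2
end

section
/- Let G be a graph satisfying the Erdős–Faber–Lovász hypothesis (G is the union of n complete graphs A_1, …, A_n, each on exactly n vertices, with every pair of the complete graphs sharing at most one common vertex). Then for every m ≥ 2, the number of vertices of G of clique degree greater than or equal to m is at most C(n,2)/C(m,2) = (n(n-1))/(m(m-1)). -/
/-- If `A 0, …, A (n-1)` are `n` sets of size `n`, any two sharing at most one vertex,
then for every `m ≥ 2` the number of vertices of clique degree at least `m`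
is at most `C(n,2) / C(m,2)`. -/
theorem efl_count_ge_deg_le {V : Type*} [DecidableEq V] (n : ℕ) (hn : 1 ≤ n)
    (A : Fin n → Finset V)
    (hcard : ∀ i, (A i).card = n)
    (hint : ∀ i j, i ≠ j → (A i ∩ A j).card ≤ 1)
    (m : ℕ) (hm : 2 ≤ m) :
    (((Finset.univ.biUnion A).filter
        (fun v => m ≤ (Finset.univ.filter (fun j => v ∈ A j)).card)).card : ℚ)
      ≤ (n.choose 2 : ℚ) / (m.choose 2 : ℚ) := by
  set D : V → Finset (Fin n) := fun v => Finset.univ.filter (fun j => v ∈ A j) with hD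
  set S := (Finset.univ.biUnion A).filter
      (fun v => m ≤ (Finset.univ.filter (fun j => v ∈ A j)).card) with hS
  -- pairwise disjointness of the 2-subsets
  have hdisj : ∀ v ∈ S, ∀ w ∈ S, v ≠ w →
      Disjoint ((D v).powersetCard 2) ((D w).powersetCard 2) := by
    intro v _ w _ hvw
    rw [Finset.disjoint_left]
    intro p hpv hpw
    rw [Finset.mem_powersetCard] at hpv hpw
    obtain ⟨i, j, hij, hpij⟩ := Finset.card_eq_two.mp hpv.2
    have hi : i ∈ p := by simp [hpij]
    have hj : j ∈ p := by simp [hpij]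
    have hvi := (Finset.mem_filter.mp (hpv.1 hi)).2
    have hvj := (Finset.mem_filter.mp (hpv.1 hj)).2
    have hwi := (Finset.mem_filter.mp (hpw.1 hi)).2
    have hwj := (Finset.mem_filter.mp (hpw.1 hj)).2
    have h2 : 2 ≤ (A i ∩ A j).card := by
      have : ({v, w} : Finset V) ⊆ A i ∩ A j := by
        intro x hx
        rcases Finset.mem_insert.mp hx with h | h
        · subst h; exact Finset.mem_inter.mpr ⟨hvi, hvj⟩
        · rw [Finset.mem_singleton] at h; subst h
          exact Finset.mem_inter.mpr ⟨hwi, hwj⟩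
      calc 2 = ({v, w} : Finset V).card := (Finset.card_pair hvw).symm
        _ ≤ _ := Finset.card_le_card this
    have := hint i j hij
    omega
  have hsum : ∑ v ∈ S, ((D v).card.choose 2) ≤ n.choose 2 := by
    have hb : (S.biUnion (fun v => (D v).powersetCard 2)).card
        = ∑ v ∈ S, ((D v).powersetCard 2).card := Finset.card_biUnion hdisj
    have hsub : S.biUnion (fun v => (D v).powersetCard 2)
        ⊆ (Finset.univ : Finset (Fin n)).powersetCard 2 := by
      intro p hp
      rcases Finset.mem_biUnion.mp hp with ⟨v, _, hpv⟩
      rw [Finset.mem_powersetCard] at hpv ⊢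
      exact ⟨Finset.subset_univ p, hpv.2⟩
    have := Finset.card_le_card hsub
    rw [hb] at this
    simpa [Finset.card_powersetCard] using this
  have hlow : S.card * m.choose 2 ≤ ∑ v ∈ S, ((D v).card.choose 2) := by
    rw [Finset.card_eq_sum_ones S, Finset.sum_mul, one_mul]
    apply Finset.sum_le_sum
    intro v hv
    exact Nat.choose_le_choose 2 (Finset.mem_filter.mp hv).2
  have key : S.card * m.choose 2 ≤ n.choose 2 := hlow.trans hsum
  have hmpos : (0:ℚ) < (m.choose 2 : ℚ) := by
    have : 0 < m.choose 2 := Nat.choose_pos hm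
    exact_mod_cast this
  rw [le_div_iff₀ hmpos]
  exact_mod_cast key
end

section
/- Let G be a graph satisfying the Erdős–Faber–Lovász hypothesis (G is the union of n complete graphs A_1, …, A_n, each on exactly n vertices, with every pair of the complete graphs sharing at most one common vertex), and let Ĥ be the induced subgraph of G on the set of vertices of clique degree greater than 1. If Ĥ admits a proper vertex coloring with n colors, then G admits a proper vertex coloring with n colors: the coloring of Ĥ can be extended to all of G by assigning to the vertices of clique degree 1 in each A_i colors from the set of n colors not already used on A_i. -/
/-- If `G` is the union of `n` complete graphs `A 0, …, A (n-1)`, each on exactly `n`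
vertices, any two sharing at most one vertex, and the subgraph `Ĥ` of `G` induced on
the vertices of clique degree greater than `1` is `n`-colorable, then `G` is
`n`-colorable. -/
theorem efl_extend_coloring {V : Type*} [DecidableEq V] (n : ℕ) (hn : 1 ≤ n)
    (A : Fin n → Finset V)
    (hcard : ∀ i, (A i).card = n)
    (hint : ∀ i j, i ≠ j → (A i ∩ A j).card ≤ 1)
    (G : SimpleGraph V)
    (hG : ∀ u v, G.Adj u v ↔ u ≠ v ∧ ∃ i, u ∈ A i ∧ v ∈ A i)
    (hH : (G.induce
        {v : V | 1 < (Finset.univ.filter (fun j => v ∈ A j)).card}).Colorable n) :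
    G.Colorable n := by
  classical
  obtain ⟨C⟩ := hH
  set dK : V → ℕ := fun v => (Finset.univ.filter (fun j => v ∈ A j)).card with hdK
  -- color of H-vertices, extended arbitrarily
  set f : V → Fin n := fun v => if h : 1 < dK v then C ⟨v, h⟩ else ⟨0, hn⟩ with hf
  have hf_eq : ∀ v (h : 1 < dK v), f v = C ⟨v, h⟩ := by
    intro v h; simp only [hf, dif_pos h]
  -- sets
  set S : Fin n → Finset V := fun i => (A i).filter (fun v => 1 < dK v) with hS
  set T : Fin n → Finset V := fun i => (A i).filter (fun v => ¬ 1 < dK v) with hT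
  have hdeg_pos : ∀ i v, v ∈ A i → 1 ≤ dK v := by
    intro i v hv
    have : i ∈ Finset.univ.filter (fun j => v ∈ A j) := by simp [hv]
    exact Finset.card_pos.mpr ⟨i, this⟩
  have hadj : ∀ i (u v : V), u ∈ A i → v ∈ A i → u ≠ v → G.Adj u v := by
    intro i u v hu hv huv
    exact (hG u v).mpr ⟨huv, i, hu, hv⟩
  have hinj : ∀ i, Set.InjOn f (S i) := by
    intro i u hu v hv huv
    simp only [hS, Finset.coe_filter, Set.mem_setOf_eq] at hu hv
    by_contra hne
    have hadjH : (G.induce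
        {v : V | 1 < (Finset.univ.filter (fun j => v ∈ A j)).card}).Adj
        ⟨u, hu.2⟩ ⟨v, hv.2⟩ := by
      simp only [SimpleGraph.comap_adj, Function.Embedding.coe_subtype]
      exact hadj i u v hu.1 hv.1 hne
    have := C.valid hadjH
    rw [hf_eq u hu.2, hf_eq v hv.2] at huv
    exact this huv
  set used : Fin n → Finset (Fin n) := fun i => (S i).image f with hused
  set avail : Fin n → Finset (Fin n) := fun i => Finset.univ \ used i with havail
  have hcard_used : ∀ i, (used i).card = (S i).card := by
    intro i; exact Finset.card_image_of_injOn (hinj i)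
  have hST : ∀ i, (S i).card + (T i).card = n := by
    intro i
    rw [hS, hT]
    rw [Finset.card_filter_add_card_filter_not]
    exact hcard i
  have hcard_avail : ∀ i, (T i).card ≤ (avail i).card := by
    intro i
    rw [havail, Finset.card_sdiff_of_subset (Finset.subset_univ _), Finset.card_univ,
      Fintype.card_fin, hcard_used]
    have h := hST i
    omega
  -- embeddings for degree-one vertices
  have hemb : ∀ i : Fin n, Nonempty ((T i : Finset V) ↪ (avail i : Finset (Fin n))) := by
    intro i
    rw [Function.Embedding.nonempty_iff_card_le, Fintype.card_coe, Fintype.card_coe]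
    exact hcard_avail i
  let g : ∀ i : Fin n, (T i : Finset V) ↪ (avail i : Finset (Fin n)) :=
    fun i => (hemb i).some
  -- the index of a degree-one vertex
  have hidx : ∀ v, dK v = 1 → ∃ i, v ∈ A i ∧ ∀ j, v ∈ A j → j = i := by
    intro v hv
    obtain ⟨a, ha⟩ := Finset.card_eq_one.mp hv
    refine ⟨a, ?_, ?_⟩
    · have : a ∈ Finset.univ.filter (fun j => v ∈ A j) := ha ▸ Finset.mem_singleton_self a
      exact (Finset.mem_filter.mp this).2
    · intro j hj
      have : j ∈ Finset.univ.filter (fun j => v ∈ A j) := by simp [hj]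
      rw [ha, Finset.mem_singleton] at this; exact this
  choose idx hidx1 hidx2 using hidx
  have hmemT : ∀ v (h : dK v = 1), v ∈ T (idx v h) := by
    intro v h
    rw [hT, Finset.mem_filter]
    exact ⟨hidx1 v h, by omega⟩
  set c : V → Fin n := fun v =>
    if h : 1 < dK v then f v
    else if h1 : dK v = 1 then (g (idx v h1) ⟨v, hmemT v h1⟩ : Fin n)
    else ⟨0, hn⟩ with hc
  refine ⟨SimpleGraph.Coloring.mk c ?_⟩
  intro u v huv
  obtain ⟨hne, i, hu, hv⟩ := (hG u v).mp huv
  have hu1 := hdeg_pos i u hu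
  have hv1 := hdeg_pos i v hv
  -- helper: a degree-one vertex in A i has idx = i, and its color is in avail i
  have hone : ∀ w (h1 : dK w = 1), w ∈ A i → c w ∈ avail i := by
    intro w h1 hw
    have hidxw : idx w h1 = i := (hidx2 w h1 i hw).symm
    have : c w = (g (idx w h1) ⟨w, hmemT w h1⟩ : Fin n) := by
      simp only [hc]
      rw [dif_neg (by omega), dif_pos h1]
    rw [this]
    have hmem : (g (idx w h1) ⟨w, hmemT w h1⟩ : Fin n) ∈ avail (idx w h1) :=
      (g (idx w h1) ⟨w, hmemT w h1⟩).2
    have hav : avail (idx w h1) = avail i := by rw [hidxw]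
    exact hav ▸ hmem
  have hbig : ∀ w (h : 1 < dK w), w ∈ A i → c w ∈ used i ∧ c w = f w := by
    intro w h hw
    have hcw : c w = f w := by simp only [hc]; rw [dif_pos h]
    refine ⟨?_, hcw⟩
    rw [hcw, hused]
    exact Finset.mem_image_of_mem f (Finset.mem_filter.mpr ⟨hw, h⟩)
  by_cases hub : 1 < dK u <;> by_cases hvb : 1 < dK v
  · -- both in H
    obtain ⟨_, hcu⟩ := hbig u hub hu
    obtain ⟨_, hcv⟩ := hbig v hvb hv
    rw [hcu, hcv, hf_eq u hub, hf_eq v hvb]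
    have hadjH : (G.induce
        {v : V | 1 < (Finset.univ.filter (fun j => v ∈ A j)).card}).Adj
        ⟨u, hub⟩ ⟨v, hvb⟩ := by
      simp only [SimpleGraph.comap_adj, Function.Embedding.coe_subtype]
      exact huv
    exact C.valid hadjH
  · -- u in H, v degree one
    have hv2 : dK v = 1 := by omega
    have h1 := (hbig u hub hu).1
    have h2 := hone v hv2 hv
    rw [havail, Finset.mem_sdiff] at h2
    intro heq; exact h2.2 (heq ▸ h1)
  · -- v in H, u degree one
    have hu2 : dK u = 1 := by omega
    have h1 := (hbig v hvb hv).1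
    have h2 := hone u hu2 hu
    rw [havail, Finset.mem_sdiff] at h2
    intro heq; exact h2.2 (heq ▸ h1)
  · -- both degree one: same index i, injectivity of g
    have hu2 : dK u = 1 := by omega
    have hv2 : dK v = 1 := by omega
    have hiu : idx u hu2 = i := (hidx2 u hu2 i hu).symm
    have hiv : idx v hv2 = i := (hidx2 v hv2 i hv).symm
    have hcu : c u = (g (idx u hu2) ⟨u, hmemT u hu2⟩ : Fin n) := by
      simp only [hc]; rw [dif_neg (by omega), dif_pos hu2]
    have hcv : c v = (g (idx v hv2) ⟨v, hmemT v hv2⟩ : Fin n) := by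
      simp only [hc]; rw [dif_neg (by omega), dif_pos hv2]
    have hmu : u ∈ T i := hiu ▸ hmemT u hu2
    have hmv : v ∈ T i := hiv ▸ hmemT v hv2
    have gcongr : ∀ (a b : Fin n), a = b → ∀ (w : V) (hwa : w ∈ T a) (hwb : w ∈ T b),
        ((g a) ⟨w, hwa⟩ : Fin n) = ((g b) ⟨w, hwb⟩ : Fin n) := by
      rintro a b rfl w hwa hwb; rfl
    have hgu : c u = (g i ⟨u, hmu⟩ : Fin n) :=
      hcu.trans (gcongr _ _ hiu u _ hmu)
    have hgv : c v = (g i ⟨v, hmv⟩ : Fin n) :=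
      hcv.trans (gcongr _ _ hiv v _ hmv)
    rw [hgu, hgv]
    intro heq
    have := (g i).injective (Subtype.ext heq)
    exact hne (congrArg Subtype.val this)
end
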